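/- arXiv:2101.09386 — 3 statements merged into one kernel-verified Lean document; each statement's English description precedes it below -/
import Mathlib

section
/- Let A = ℤ[x, x⁻¹] be the ring of Laurent polynomials over ℤ, and let Γ be the set of all 2×2 matrices of the form [[x^i, a], [0, x^{−i}]] with i ∈ ℤ and a ∈ A. Then Γ is a subgroup of GL₂(A); it is solvable; and it is generated as a group by the three matrices t = [[x, 0], [0, x⁻¹]], u = [[1, 1], [0, 1]], and v = [[1, x], [0, 1]]; in particular Γ is finitely generated. -/
/-!
Every element of `Γ` factors as `tⁱ · [[1, b], [0, 1]]`, and conjugation by `tᵏ` turns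
`[[1, b], [0, 1]]` into `[[1, x²ᵏ b], [0, 1]]`. Conjugating `u` and `v` therefore gives
`[[1, xⁿ], [0, 1]]` for even and odd `n` respectively, and the `xⁿ` generate `ℤ[x, x⁻¹]`
additively, so `t, u, v` generate `Γ`. Solvability comes from the upper triangular group of
`GL₂`: its diagonal part is abelian and the kernel of the diagonal is the abelian group of
matrices `[[1, b], [0, 1]]`.
-/

open Matrix LaurentPolynomial

theorem Matrix.upper_mul_upper_fin_two {α : Type*} [Semiring α] (a b d a' b' d' : α) :
    !![a, b; 0, d] * !![a', b'; 0, d'] = !![a * a', a * b' + b * d'; 0, d * d'] := by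
  simp

namespace Matrix.GeneralLinearGroup

variable {R : Type*} [CommRing R]

variable (R) in
def upperTriangular : Subgroup (GL (Fin 2) R) where
  carrier := {g | g 1 0 = 0}
  one_mem' := by simp
  mul_mem' {g h} hg hh := by simp_all [mul_apply]
  inv_mem' {g} hg := by simp_all [inv_def, adjugate_fin_two]

theorem mem_upperTriangular {g : GL (Fin 2) R} : g ∈ upperTriangular R ↔ g 1 0 = 0 := Iff.rfl

variable (R) in
def diagEntries : upperTriangular R →* R × R where
  toFun g := (g.1 0 0, g.1 1 1)
  map_one' := by simp
  map_mul' g h := by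
    have hg := mem_upperTriangular.1 g.2
    have hh := mem_upperTriangular.1 h.2
    ext <;> simp [mul_apply, hg, hh]

instance : Group.IsSolvable (upperTriangular R) := by
  refine Group.isSolvable_of_ker_le_range
    (upperRightHom.toMonoidHom.codRestrict _ fun b => by simp [mem_upperTriangular])
    (diagEntries R).toHomUnits fun g hg => ?_
  have h10 := mem_upperTriangular.1 g.2
  have hdiag : diagEntries R g = 1 := by simpa [Units.ext_iff] using hg
  simp only [diagEntries, MonoidHom.coe_mk, OneHom.coe_mk, Prod.mk_eq_one] at hdiag
  refine ⟨Multiplicative.ofAdd (g.1 0 1), ?_⟩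
  ext i j
  fin_cases i <;> fin_cases j <;> simp [hdiag, h10]

def diagHom : Rˣ →* GL (Fin 2) R where
  toFun r := ⟨!![↑r, 0; 0, ↑r⁻¹], !![↑r⁻¹, 0; 0, ↑r], by simp [one_fin_two],
    by simp [one_fin_two]⟩
  map_one' := by ext : 1; simp [one_fin_two]
  map_mul' r s := by ext : 1; simp [mul_comm]

@[simp] theorem coe_diagHom (r : Rˣ) :
    (diagHom r : Matrix (Fin 2) (Fin 2) R) = !![↑r, 0; 0, ↑r⁻¹] := rfl

theorem diagHom_mul_upperRightHom_mul_inv (r : Rˣ) (b : R) :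
    diagHom r * upperRightHom b * (diagHom r)⁻¹ = upperRightHom (r * b * r) := by
  ext : 1
  simp [← map_inv]

end Matrix.GeneralLinearGroup

open Matrix.GeneralLinearGroup

theorem Subgroup.mul_mul_mem_strictPeriods {R : Type*} [CommRing R] {𝒢 : Subgroup (GL (Fin 2) R)}
    {r : Rˣ} (hr : diagHom r ∈ 𝒢) {b : R} (hb : b ∈ 𝒢.strictPeriods) :
    ↑r * b * ↑r ∈ 𝒢.strictPeriods := by
  rw [mem_strictPeriods_iff, ← diagHom_mul_upperRightHom_mul_inv]
  exact 𝒢.mul_mem (𝒢.mul_mem hr (mem_strictPeriods_iff.1 hb)) (𝒢.inv_mem hr)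

namespace LaurentPolynomial

variable {R : Type*} [CommRing R]

noncomputable def unitT : Multiplicative ℤ →* R[T;T⁻¹]ˣ :=
  (AddMonoidAlgebra.of R ℤ).toHomUnits

@[simp] theorem val_unitT (n : ℤ) : ((unitT (.ofAdd n) : R[T;T⁻¹]ˣ) : R[T;T⁻¹]) = T n :=
  rfl

@[simp] theorem val_inv_unitT (n : ℤ) :
    (↑(unitT (.ofAdd n) : R[T;T⁻¹]ˣ)⁻¹ : R[T;T⁻¹]) = T (-n) :=
  rfl

theorem closure_range_T : AddSubgroup.closure (Set.range (T : ℤ → ℤ[T;T⁻¹])) = ⊤ := by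
  refine eq_top_iff.2 fun f _ => f.induction_on' (fun _ _ => add_mem) fun n a => ?_
  rw [← smul_eq_C_mul]
  exact AddSubgroup.zsmul_mem _ (AddSubgroup.subset_closure (Set.mem_range_self n)) a

theorem diagHom_unitT_zpow (k : ℤ) :
    diagHom (R := R[T;T⁻¹]) (unitT (.ofAdd 1)) ^ k = diagHom (unitT (.ofAdd k)) := by
  rw [← map_zpow, ← map_zpow, ← ofAdd_zsmul, zsmul_one, Int.cast_id]

theorem T_mem_strictPeriods {𝒢 : Subgroup (GL (Fin 2) R[T;T⁻¹])}
    (ht : diagHom (unitT (.ofAdd 1)) ∈ 𝒢) (hu : upperRightHom 1 ∈ 𝒢)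
    (hv : upperRightHom (T 1) ∈ 𝒢) (n : ℤ) : T n ∈ 𝒢.strictPeriods := by
  have hdiag (k : ℤ) : diagHom (unitT (.ofAdd k)) ∈ 𝒢 := by
    simpa only [diagHom_unitT_zpow] using 𝒢.zpow_mem ht k
  obtain ⟨k, rfl | rfl⟩ := Int.even_or_odd' n
  · have h := 𝒢.mul_mul_mem_strictPeriods (hdiag k) (Subgroup.mem_strictPeriods_iff.2 hu)
    rwa [val_unitT, mul_one, ← T_add, ← two_mul] at h
  · have h := 𝒢.mul_mul_mem_strictPeriods (hdiag k) (Subgroup.mem_strictPeriods_iff.2 hv)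
    rwa [val_unitT, ← T_add, ← T_add, add_right_comm, ← two_mul] at h

variable (R) in
def monomialUpperTriangular : Subgroup (GL (Fin 2) R[T;T⁻¹]) where
  carrier := {g | ∃ (i : ℤ) (a : R[T;T⁻¹]),
    (g : Matrix (Fin 2) (Fin 2) R[T;T⁻¹]) = !![T i, a; 0, T (-i)]}
  one_mem' := ⟨0, 0, by simp [one_fin_two, T_zero]⟩
  mul_mem' := by
    rintro g h ⟨i, a, hg⟩ ⟨j, b, hh⟩
    exact ⟨i + j, T i * b + a * T (-j), by
      rw [coe_mul, hg, hh, upper_mul_upper_fin_two, ← T_add, ← T_add, neg_add]⟩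
  inv_mem' := by
    rintro g ⟨i, a, hg⟩
    refine ⟨-i, -a, Units.inv_eq_of_mul_eq_one_right ?_⟩
    rw [hg, upper_mul_upper_fin_two, neg_neg, ← T_add, ← T_add, add_neg_cancel, neg_add_cancel,
      T_zero, one_fin_two, mul_neg, mul_comm, neg_add_cancel]

theorem monomialUpperTriangular_le_upperTriangular :
    monomialUpperTriangular R ≤ upperTriangular R[T;T⁻¹] := by
  rintro g ⟨i, a, hg⟩
  simp [mem_upperTriangular, hg]

instance : Group.IsSolvable (monomialUpperTriangular R) :=
  Group.isSolvable_of_isSolvable_injective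
    (Subgroup.inclusion_injective monomialUpperTriangular_le_upperTriangular)

theorem eq_diagHom_mul_upperRightHom {g : GL (Fin 2) R[T;T⁻¹]} {i : ℤ} {a : R[T;T⁻¹]}
    (hg : (g : Matrix (Fin 2) (Fin 2) R[T;T⁻¹]) = !![T i, a; 0, T (-i)]) :
    g = diagHom (unitT (.ofAdd i)) * upperRightHom (T (-i) * a) := by
  ext : 1
  simp [hg, ← mul_assoc]

theorem monomialUpperTriangular_eq_closure :
    monomialUpperTriangular ℤ =
      Subgroup.closure {diagHom (unitT (.ofAdd 1)), upperRightHom 1, upperRightHom (T 1)} := by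
  set Γ : Subgroup (GL (Fin 2) ℤ[T;T⁻¹]) := Subgroup.closure
    {diagHom (unitT (.ofAdd 1)), upperRightHom 1, upperRightHom (T 1)}
  have ht : diagHom (unitT (.ofAdd 1)) ∈ Γ := Subgroup.subset_closure (by simp)
  have hu : upperRightHom 1 ∈ Γ := Subgroup.subset_closure (by simp)
  have hv : upperRightHom (T 1) ∈ Γ := Subgroup.subset_closure (by simp)
  have hperiods : Γ.strictPeriods = ⊤ := eq_top_iff.2 <| closure_range_T.ge.trans <|
    (AddSubgroup.closure_le _).2 <| Set.range_subset_iff.2 <| T_mem_strictPeriods ht hu hv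
  refine le_antisymm ?_ ?_
  · rintro g ⟨i, a, hg⟩
    rw [eq_diagHom_mul_upperRightHom hg, ← diagHom_unitT_zpow]
    exact Γ.mul_mem (Γ.zpow_mem ht i)
      (Subgroup.mem_strictPeriods_iff.1 (hperiods ▸ AddSubgroup.mem_top _))
  · rw [Subgroup.closure_le]
    rintro g (rfl | rfl | rfl)
    · exact ⟨1, 0, rfl⟩
    · exact ⟨0, 1, by simp [T_zero]⟩
    · exact ⟨0, T 1, by simp [T_zero]⟩

end LaurentPolynomial

/-- The set of matrices `[[x^i, a], [0, x^{-i}]]` over the Laurent polynomial ring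
`A = ℤ[x, x⁻¹]` is a subgroup `Γ` of `GL₂(A)`; it is solvable and is generated by the three
matrices `t = [[x,0],[0,x⁻¹]]`, `u = [[1,1],[0,1]]`, `v = [[1,x],[0,1]]`; in particular it is
finitely generated. -/
theorem stmt_17 :
    ∃ Γ : Subgroup (GL (Fin 2) (LaurentPolynomial ℤ)),
      (∀ g : GL (Fin 2) (LaurentPolynomial ℤ), g ∈ Γ ↔
        ∃ (i : ℤ) (a : LaurentPolynomial ℤ),
          (g : Matrix (Fin 2) (Fin 2) (LaurentPolynomial ℤ)) = !![T i, a; 0, T (-i)]) ∧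
      IsSolvable ↥Γ ∧
      (∃ t u v : GL (Fin 2) (LaurentPolynomial ℤ),
        (t : Matrix (Fin 2) (Fin 2) (LaurentPolynomial ℤ)) = !![T 1, 0; 0, T (-1)] ∧
        (u : Matrix (Fin 2) (Fin 2) (LaurentPolynomial ℤ)) = !![1, 1; 0, 1] ∧
        (v : Matrix (Fin 2) (Fin 2) (LaurentPolynomial ℤ)) = !![1, T 1; 0, 1] ∧
        Γ = Subgroup.closure {t, u, v}) ∧
      Group.FG ↥Γ := by
  have hΓ := monomialUpperTriangular_eq_closure
  refine ⟨monomialUpperTriangular ℤ, fun g => Iff.rfl, (inferInstance : Group.IsSolvable _),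
    ⟨_, _, _, rfl, rfl, rfl, hΓ⟩, ?_⟩
  rw [hΓ]
  infer_instance
end

section
/- Let A = ℤ[x, x⁻¹] be the ring of Laurent polynomials over ℤ, and let Γ be the subgroup of GL₂(A) consisting of all matrices of the form [[x^i, a], [0, x^{−i}]] with i ∈ ℤ and a ∈ A. Then Γ is not boundedly generated: there do not exist elements γ₁, …, γ_r ∈ Γ such that every element of Γ can be written as γ₁^{k₁}⋯γ_r^{k_r} with k₁, …, k_r ∈ ℤ. -/
/-!
Reduce modulo `2` and modulo `x ^ n - 1`: the ring map `ℤ[x, x⁻¹] → 𝔽₂[ℤ/n]` sends `Γ` into upper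
triangular matrices whose diagonal entries are `n`-th roots of unity, and such a matrix has order
dividing `2n`, because its `n`-th power is unipotent and unipotents have order `2` in characteristic
`2`. If `Γ = ⟨γ₁⟩ ⋯ ⟨γ_r⟩`, every image `γ₁^{k₁} ⋯ γ_r^{k_r}` depends only on the `kᵢ` modulo `2n`,
so the image of `Γ` has at most `(2n)^r` elements. But it contains the `2^n` unipotents
`[[1, c], [0, 1]]`, `c ∈ 𝔽₂[ℤ/n]`, and `(2n)^r < 2^n` for large `n`.
-/

open Matrix LaurentPolynomial

section BoundedGeneration

variable {G X : Type*} [Group G] {r e : ℕ} [NeZero e]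

lemma zpow_eq_pow_val_intCast {g : G} (hg : g ^ e = 1) (k : ℤ) :
    g ^ k = g ^ (k : ZMod e).val := by
  rw [zpow_eq_zpow_emod' k hg, ← ZMod.val_intCast, zpow_natCast]

lemma Nat.card_le_pow_of_injective_of_forall_eq_prod_zpow (γ : Fin r → G)
    (hγ : ∀ i, γ i ^ e = 1) (F : X → G) (hF : F.Injective)
    (hgen : ∀ x, ∃ k : Fin r → ℤ, F x = (List.ofFn fun i => γ i ^ k i).prod) :
    Nat.card X ≤ e ^ r := by
  choose k hk using hgen
  have hinj : (fun x i => (k x i : ZMod e)).Injective := by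
    intro x y hxy
    apply hF
    simp only [hk, zpow_eq_pow_val_intCast (hγ _), congrFun hxy]
  simpa using Nat.card_le_card_of_injective _ hinj

end BoundedGeneration

lemma Matrix.exists_pow_upperTriangular_eq {R : Type*} [Semiring R] (u a v : R) (m : ℕ) :
    ∃ b, !![u, a; 0, v] ^ m = !![u ^ m, b; 0, v ^ m] := by
  induction m with
  | zero => exact ⟨0, by simp [one_fin_two]⟩
  | succ m ih =>
    obtain ⟨b, hb⟩ := ih
    exact ⟨u ^ m * a + b * v, by simp [pow_succ, hb]⟩

lemma Matrix.GeneralLinearGroup.pow_two_mul_eq_one_of_upperTriangular {R : Type*} [CommRing R]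
    [CharP R 2] {g : GL (Fin 2) R} {u a v : R}
    (hg : (g : Matrix (Fin 2) (Fin 2) R) = !![u, a; 0, v]) {n : ℕ} (hu : u ^ n = 1)
    (hv : v ^ n = 1) : g ^ (2 * n) = 1 := by
  obtain ⟨b, hb⟩ := exists_pow_upperTriangular_eq u a v n
  ext1
  rw [Units.val_pow_eq_pow_val, hg, mul_comm, pow_mul, hb, hu, hv, sq, mul_fin_two]
  simp [CharTwo.add_self_eq_zero, one_fin_two]

lemma Matrix.GeneralLinearGroup.map_upperRightHom {R S : Type*} [CommRing R] [CommRing S]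
    (f : R →+* S) (a : R) : map f (upperRightHom a) = upperRightHom (f a) := by
  ext i j
  fin_cases i <;> fin_cases j <;> simp [GeneralLinearGroup.map_apply]

lemma AddMonoidAlgebra.mapDomain_surjective {R M N : Type*} [Semiring R] {f : M → N}
    (hf : f.Surjective) : (mapDomain (R := R) f).Surjective := by
  intro y
  obtain ⟨x, hx⟩ := Finsupp.mapDomain_surjective hf y.coeff
  exact ⟨ofCoeff x, by simp [mapDomain, hx]⟩

lemma AddMonoidAlgebra.nat_card {R M : Type*} [Semiring R] [Finite M] :
    Nat.card (AddMonoidAlgebra R M) = Nat.card R ^ Nat.card M := by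
  rw [Nat.card_congr (coeffEquiv.trans Finsupp.equivFunOnFinite), Nat.card_fun]

instance (n : ℕ) : CharP (AddMonoidAlgebra (ZMod 2) (ZMod n)) 2 :=
  charP_of_injective_algebraMap' (ZMod 2) 2

/-- The reduction `ℤ[x, x⁻¹] → 𝔽₂[ℤ/n]` sending `x` to the generator `1 : ℤ/n`. -/
noncomputable def laurentReduction (n : ℕ) :
    LaurentPolynomial ℤ →+* AddMonoidAlgebra (ZMod 2) (ZMod n) :=
  (AddMonoidAlgebra.mapDomainRingHom (ZMod 2) (Int.castAddHom (ZMod n))).comp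
    (AddMonoidAlgebra.mapRingHom ℤ (Int.castRingHom (ZMod 2)))

lemma laurentReduction_surjective (n : ℕ) : Function.Surjective (laurentReduction n) :=
  (AddMonoidAlgebra.mapDomain_surjective ZMod.intCast_surjective).comp
    (AddMonoidAlgebra.map_surjective (Int.castRingHom (ZMod 2)).toAddMonoidHom
      ZMod.intCast_surjective)

lemma laurentReduction_T (n : ℕ) (i : ℤ) :
    laurentReduction n (T i) = AddMonoidAlgebra.single (i : ZMod n) 1 := by
  rw [laurentReduction, RingHom.comp_apply, T, AddMonoidAlgebra.mapRingHom_single, map_one,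
    AddMonoidAlgebra.mapDomainRingHom_apply, AddMonoidAlgebra.mapDomain_single]
  rfl

lemma laurentReduction_T_pow (n : ℕ) (i : ℤ) : laurentReduction n (T i) ^ n = 1 := by
  rw [← map_pow, T_pow, laurentReduction_T]
  simp [AddMonoidAlgebra.one_def]

lemma exists_two_mul_pow_lt_two_pow (r : ℕ) : ∃ n, 0 < n ∧ (2 * n) ^ r < 2 ^ n := by
  refine ⟨2 ^ (2 * r + 2), by positivity, ?_⟩
  rw [← pow_succ', ← pow_mul]
  apply Nat.pow_lt_pow_right one_lt_two
  have h2 : r + 1 ≤ 2 ^ r := Nat.lt_two_pow_self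
  have h3 : 2 ^ (2 * r + 2) = 4 * 2 ^ r * 2 ^ r := by ring
  nlinarith

/-- The subgroup `Γ` of `GL₂(ℤ[x,x⁻¹])` of matrices `[[x^i, a], [0, x^{-i}]]` is not boundedly
generated: there are no `γ₁, …, γ_r ∈ Γ` such that every element of `Γ` is a product
`γ₁^{k₁} ⋯ γ_r^{k_r}` with integer exponents. -/
theorem stmt_18 (Γ : Subgroup (GL (Fin 2) (LaurentPolynomial ℤ)))
    (hΓ : ∀ g : GL (Fin 2) (LaurentPolynomial ℤ), g ∈ Γ ↔
      ∃ (i : ℤ) (a : LaurentPolynomial ℤ),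
        (g : Matrix (Fin 2) (Fin 2) (LaurentPolynomial ℤ)) = !![T i, a; 0, T (-i)]) :
    ¬ ∃ (r : ℕ) (γ : Fin r → GL (Fin 2) (LaurentPolynomial ℤ)),
        (∀ i, γ i ∈ Γ) ∧
        ∀ x ∈ Γ, ∃ k : Fin r → ℤ, x = (List.ofFn fun i => γ i ^ k i).prod := by
  rintro ⟨r, γ, hγΓ, hgen⟩
  obtain ⟨n, hn0, hn⟩ := exists_two_mul_pow_lt_two_pow r
  have : NeZero n := ⟨hn0.ne'⟩
  set f := GeneralLinearGroup.map (n := Fin 2) (laurentReduction n)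
  have horder : ∀ i, f (γ i) ^ (2 * n) = 1 := by
    intro i
    obtain ⟨j, a, hg⟩ := (hΓ _).1 (hγΓ i)
    refine GeneralLinearGroup.pow_two_mul_eq_one_of_upperTriangular
      (a := laurentReduction n a) ?_ (laurentReduction_T_pow n j) (laurentReduction_T_pow n (-j))
    ext k l
    fin_cases k <;> fin_cases l <;> simp [f, GeneralLinearGroup.map_apply, hg]
  have hprod (c) : ∃ k : Fin r → ℤ,
      GeneralLinearGroup.upperRightHom c = (List.ofFn fun i => f (γ i) ^ k i).prod := by
    obtain ⟨a, rfl⟩ := laurentReduction_surjective n c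
    obtain ⟨k, hk⟩ := hgen _ ((hΓ (GeneralLinearGroup.upperRightHom a)).2 ⟨0, a, by simp⟩)
    refine ⟨k, ?_⟩
    rw [← GeneralLinearGroup.map_upperRightHom, hk, map_list_prod, List.map_ofFn]
    simp only [Function.comp_def, map_zpow, f]
  have hcard := Nat.card_le_pow_of_injective_of_forall_eq_prod_zpow (f ∘ γ) horder _
    GeneralLinearGroup.injective_upperRightHom hprod
  rw [AddMonoidAlgebra.nat_card, Nat.card_zmod, Nat.card_zmod] at hcard
  omega
end

section
/- Let Γ be a group and let Δ be a subgroup of Γ of finite index. Then Γ is boundedly generated if and only if Δ is boundedly generated. -/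
/-- A group `G` is boundedly generated if it is a finite product of cyclic subgroups:
there are `γ₁, …, γ_r ∈ G` such that every element is `γ₁^{k₁} ⋯ γ_r^{k_r}`. -/
def BoundedGeneration (G : Type*) [Group G] : Prop :=
  ∃ (r : ℕ) (γ : Fin r → G), ∀ x : G, ∃ k : Fin r → ℤ,
    x = (List.ofFn fun i => γ i ^ k i).prod

/-!
Write `⟨γ₁⟩⋯⟨γ_r⟩` for the pointwise product of the cyclic subgroups generated by a list of
elements. If `Δ` has finite index then `G = TΔ` for a finite transversal `T ⊆ ⟨t₁⟩⋯⟨t_n⟩`, so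
bounded generation passes from `Δ` to `G`. Conversely let `N ≤ Δ` be the normal core and
`n` its index, so that `γⁿ ∈ N` for every `γ`. Splitting `γᵏ = (γⁿ)^q γˢ` with `0 ≤ s < n`
and moving `γˢ` to the right by conjugation gives `⟨γ₁⟩⋯⟨γ_r⟩ ⊆ ⟨c₁⟩⋯⟨c_m⟩ F` with all
`cⱼ ∈ N` and `F` finite. Hence `Δ ⊆ ⟨c₁⟩⋯⟨c_m⟩ (F ∩ Δ)`, and the finitely many elements of
`F ∩ Δ` are absorbed into further cyclic factors.
-/

section CyclicProducts

open Subgroup Set Pointwise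

variable {G H : Type*} [Group G] [Group H]

def cyclicProd (L : List G) : Set G :=
  (L.map fun g => (zpowers g : Set G)).prod

@[simp]
theorem cyclicProd_nil : cyclicProd ([] : List G) = 1 := rfl

@[simp]
theorem cyclicProd_cons (g : G) (L : List G) :
    cyclicProd (g :: L) = (zpowers g : Set G) * cyclicProd L := rfl

theorem cyclicProd_append (L M : List G) :
    cyclicProd (L ++ M) = cyclicProd L * cyclicProd M := by
  simp only [cyclicProd, List.map_append, List.prod_append]

theorem one_mem_cyclicProd (L : List G) : (1 : G) ∈ cyclicProd L := by
  induction L with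
  | nil => rfl
  | cons g L ih => exact ⟨1, one_mem _, 1, ih, one_mul 1⟩

theorem List.Sublist.cyclicProd_subset {L M : List G} (h : L.Sublist M) :
    cyclicProd L ⊆ cyclicProd M := by
  induction h with
  | slnil => rfl
  | cons g _ ih =>
    exact fun x hx => ⟨1, one_mem _, x, ih hx, one_mul x⟩
  | cons_cons g _ ih => exact mul_subset_mul_left ih

theorem mem_cyclicProd_of_mem {g : G} {L : List G} (h : g ∈ L) : g ∈ cyclicProd L :=
  (List.singleton_sublist.2 h).cyclicProd_subset
    ⟨g, mem_zpowers g, 1, one_mem_cyclicProd [], mul_one g⟩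

theorem image_cyclicProd {F : Type*} [FunLike F G H] [MonoidHomClass F G H] (f : F)
    (L : List G) : f '' cyclicProd L = cyclicProd (L.map f) := by
  induction L with
  | nil => simp [Set.image_one]; rfl
  | cons g L ih =>
    rw [cyclicProd_cons, image_mul, ih, List.map_cons, cyclicProd_cons,
      ← MonoidHom.coe_coe f, ← coe_map, MonoidHom.map_zpowers]

theorem cyclicProd_subset_of_forall_mem {K : Subgroup G} {L : List G} (hL : ∀ g ∈ L, g ∈ K) :
    cyclicProd L ⊆ K := by
  induction L with
  | nil => simp
  | cons g L ih =>
    rintro _ ⟨a, ha, b, hb, rfl⟩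
    exact K.mul_mem (zpowers_le.2 (hL g List.mem_cons_self) ha)
      (ih (fun x hx => hL x (List.mem_cons_of_mem g hx)) hb)

theorem Set.Finite.exists_cyclicProd_superset {S : Set G} (hS : S.Finite) :
    ∃ L : List G, (∀ g ∈ L, g ∈ S) ∧ S ⊆ cyclicProd L :=
  ⟨hS.toFinset.toList, by simp, fun g hg => mem_cyclicProd_of_mem (by simpa using hg)⟩

theorem boundedGeneration_iff_exists_cyclicProd_eq_univ :
    BoundedGeneration G ↔ ∃ L : List G, cyclicProd L = univ := by
  have key : ∀ {r} (γ : Fin r → G) (x : G), x ∈ cyclicProd (List.ofFn γ) ↔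
      ∃ k : Fin r → ℤ, x = (List.ofFn fun i => γ i ^ k i).prod := by
    intro r γ x
    simp only [cyclicProd, List.map_ofFn, Function.comp_def, mem_prod_list_ofFn]
    constructor
    · rintro ⟨f, rfl⟩
      choose k hk using fun i => mem_zpowers_iff.1 (f i).2
      exact ⟨k, by simp only [hk]⟩
    · rintro ⟨k, rfl⟩
      exact ⟨fun i => ⟨γ i ^ k i, zpow_mem (mem_zpowers _) _⟩, rfl⟩
  constructor
  · rintro ⟨r, γ, hγ⟩
    exact ⟨List.ofFn γ, eq_univ_of_forall fun x => (key γ x).2 (hγ x)⟩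
  · rintro ⟨L, hL⟩
    refine ⟨L.length, L.get, fun x => (key L.get x).1 ?_⟩
    rw [List.ofFn_get, hL]
    trivial

theorem boundedGeneration_subgroup_iff (K : Subgroup G) :
    BoundedGeneration K ↔ ∃ L : List G, (∀ g ∈ L, g ∈ K) ∧ (K : Set G) ⊆ cyclicProd L := by
  rw [boundedGeneration_iff_exists_cyclicProd_eq_univ]
  constructor
  · rintro ⟨L, hL⟩
    refine ⟨L.map K.subtype, fun g hg => ?_, ?_⟩
    · obtain ⟨x, -, rfl⟩ := List.mem_map.1 hg
      exact x.2
    rw [← image_cyclicProd, hL, image_univ, coe_subtype, Subtype.range_coe]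
  · rintro ⟨L, hLK, hK⟩
    lift L to List K using hLK
    refine ⟨L, eq_univ_of_forall fun x => ?_⟩
    have hx : K.subtype x ∈ K.subtype '' cyclicProd L := by
      rw [image_cyclicProd]
      exact hK x.2
    exact (K.subtype_injective.mem_set_image).1 hx

theorem exists_zpow_eq_pow_zpow_mul_pow (γ : G) {n : ℕ} (hn : 0 < n) (k : ℤ) :
    ∃ q : ℤ, ∃ s < n, γ ^ k = (γ ^ n) ^ q * γ ^ s := by
  have hn' : (0 : ℤ) < n := by exact_mod_cast hn
  have hlt := Int.emod_lt_of_pos k hn'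
  refine ⟨k / n, (k % n).toNat, by omega, ?_⟩
  rw [← zpow_natCast γ, ← zpow_mul, ← zpow_natCast γ, ← zpow_add,
    Int.toNat_of_nonneg (Int.emod_nonneg k hn'.ne'), Int.mul_ediv_add_emod]

theorem Subgroup.exists_cyclicProd_subset_cyclicProd_mul_finite (N : Subgroup G) [N.Normal]
    [N.FiniteIndex] (L : List G) :
    ∃ (M : List G) (F : Set G), (∀ m ∈ M, m ∈ N) ∧ F.Finite ∧
      cyclicProd L ⊆ cyclicProd M * F := by
  induction L with
  | nil => exact ⟨[], 1, by simp, finite_one, by simp⟩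
  | cons γ L ih =>
    obtain ⟨M, F, hMN, hF, hL⟩ := ih
    set n := N.index
    have hn : 0 < n := Nat.pos_of_ne_zero FiniteIndex.index_ne_zero
    let conjM : ℕ → List G := fun s => M.map (MulAut.conj (γ ^ s))
    refine ⟨γ ^ n :: ((List.range n).map conjM).flatten,
      image2 (fun s f => γ ^ s * f) (Iio n) F, ?_, (finite_Iio n).image2 _ hF, ?_⟩
    · rintro _ (_ | ⟨_, hg⟩)
      · exact pow_index_mem N γ
      · obtain ⟨_, hl, hg⟩ := List.mem_flatten.1 hg
        obtain ⟨s, -, rfl⟩ := List.mem_map.1 hl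
        obtain ⟨m, hm, rfl⟩ := List.mem_map.1 hg
        exact Normal.conj_mem ‹_› m (hMN m hm) _
    rintro _ ⟨_, ⟨k, rfl⟩, y, hy, rfl⟩
    obtain ⟨m, hm, f, hf, rfl⟩ := hL hy
    obtain ⟨q, s, hs, hk⟩ := exists_zpow_eq_pow_zpow_mul_pow γ hn k
    have hconj : γ ^ s * m * (γ ^ s)⁻¹ ∈ cyclicProd (conjM s) := by
      rw [← image_cyclicProd]
      exact ⟨m, hm, MulAut.conj_apply _ _⟩
    have hsub : (conjM s).Sublist ((List.range n).map conjM).flatten :=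
      List.sublist_flatten_of_mem (List.mem_map_of_mem (List.mem_range.2 hs))
    -- `γᵏ m f = (γⁿ)^q (γˢ m γ⁻ˢ) (γˢ f)`
    refine ⟨(γ ^ n) ^ q * (γ ^ s * m * (γ ^ s)⁻¹), ?_, γ ^ s * f, mem_image2_of_mem hs hf, ?_⟩
    · exact ⟨(γ ^ n) ^ q, zpow_mem (mem_zpowers _) q, _, hsub.cyclicProd_subset hconj, rfl⟩
    · simp only [hk]; group

theorem BoundedGeneration.of_subgroup (K : Subgroup G) [K.FiniteIndex]
    (hK : BoundedGeneration K) : BoundedGeneration G := by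
  obtain ⟨L, -, hL⟩ := (boundedGeneration_subgroup_iff K).1 hK
  obtain ⟨T, -, hT⟩ := (finite_range fun q : G ⧸ K => q.out).exists_cyclicProd_superset
  refine boundedGeneration_iff_exists_cyclicProd_eq_univ.2
    ⟨T ++ L, eq_univ_of_forall fun x => ?_⟩
  obtain ⟨k, hk⟩ := QuotientGroup.mk_out_eq_mul K x
  rw [cyclicProd_append]
  exact ⟨_, hT ⟨(x : G ⧸ K), rfl⟩, _, hL (K.inv_mem k.2), by simp only [hk, mul_inv_cancel_right]⟩

theorem BoundedGeneration.subgroup (hG : BoundedGeneration G) (K : Subgroup G)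
    [K.FiniteIndex] : BoundedGeneration K := by
  obtain ⟨L, hL⟩ := boundedGeneration_iff_exists_cyclicProd_eq_univ.1 hG
  obtain ⟨M, F, hMN, hF, hLMF⟩ := K.normalCore.exists_cyclicProd_subset_cyclicProd_mul_finite L
  have hMK : ∀ m ∈ M, m ∈ K := fun m hm => K.normalCore_le (hMN m hm)
  obtain ⟨T, hTK, hT⟩ := (hF.inter_of_left K).exists_cyclicProd_superset
  refine (boundedGeneration_subgroup_iff K).2 ⟨M ++ T, ?_, fun x hx => ?_⟩
  · simp only [List.mem_append]
    rintro g (hg | hg)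
    exacts [hMK g hg, (hTK g hg).2]
  obtain ⟨m, hm, f, hf, rfl⟩ := hLMF (hL ▸ mem_univ x)
  have hmK : m ∈ K := cyclicProd_subset_of_forall_mem hMK hm
  rw [cyclicProd_append]
  exact ⟨m, hm, f, hT ⟨hf, (K.mul_mem_cancel_left hmK).1 hx⟩, rfl⟩

end CyclicProducts

/-- A group is boundedly generated if and only if any of its finite index subgroups is. -/
theorem stmt_19 {G : Type*} [Group G] (Δ : Subgroup G) (h : Δ.FiniteIndex) :
    BoundedGeneration G ↔ BoundedGeneration ↥Δ :=
  ⟨fun hG => hG.subgroup Δ, BoundedGeneration.of_subgroup Δ⟩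
end
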